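/- arXiv:2604.03212 — 4 statements merged into one kernel-verified Lean document; each statement's English description precedes it below -/
import Mathlib

section
/- Let d ≥ 1, σ > 0, μ ∈ ℝ^d, and let C ⊂ ℝ^d be a finite nonempty set of K−1 competitor prototypes (K ≥ 2 classes in total) such that ‖μ − p‖ ≥ γ for every p ∈ C, where γ > 0. If z is distributed according to the multivariate Gaussian N(μ, σ²I_d), then the probability that some competitor prototype is at least as close to z as μ, i.e. P(∃ p ∈ C, ‖z − p‖ ≤ ‖z − μ‖), is at most (K−1)·exp(−γ²/(8σ²)). -/
open MeasureTheory ProbabilityTheory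

/-- The multivariate Gaussian measure `N(μ, σ²I_d)` on `ℝ^d` (as `EuclideanSpace ℝ (Fin d)`),
built as the pushforward of the product of one-dimensional Gaussians. -/
noncomputable def gaussianNd {d : ℕ} (μ : EuclideanSpace ℝ (Fin d)) (σ : ℝ) :
    Measure (EuclideanSpace ℝ (Fin d)) :=
  (Measure.pi (fun i => gaussianReal (μ i) ⟨σ ^ 2, sq_nonneg σ⟩)).map
    (MeasurableEquiv.toLp 2 (Fin d → ℝ))

section GaussAux
open Real

lemma my_exp_mul_pdf (w : NNReal) (hw : w ≠ 0) (x : ℝ) :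
    rexp x * gaussianPDFReal 0 w x = rexp ((w : ℝ) / 2) * gaussianPDFReal (w : ℝ) w x := by
  have hw' : (w : ℝ) ≠ 0 := by exact_mod_cast hw
  simp only [gaussianPDFReal]
  rw [mul_left_comm, mul_left_comm (rexp ((w:ℝ)/2)), ← Real.exp_add, ← Real.exp_add]
  congr 2
  field_simp
  ring

lemma my_integral_exp_gauss0 (w : NNReal) :
    Integrable rexp (gaussianReal 0 w) ∧ ∫ x, rexp x ∂(gaussianReal 0 w) = rexp ((w : ℝ) / 2) := by
  by_cases hw : w = 0
  · subst hw
    constructor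
    · simp only [gaussianReal_zero_var]
      exact (integrable_const (rexp 0)).congr (ae_eq_dirac rexp).symm
    · simp [gaussianReal_zero_var, integral_dirac]
  · have hpm : Measurable fun x => (gaussianPDFReal 0 w x).toNNReal :=
      (measurable_gaussianPDFReal 0 w).real_toNNReal
    have hden : gaussianReal 0 w
        = volume.withDensity (fun x => ((gaussianPDFReal 0 w x).toNNReal : ENNReal)) := by
      rw [gaussianReal_of_var_ne_zero _ hw]; rfl
    have hkey : (fun x => ((gaussianPDFReal 0 w x).toNNReal : ℝ) • rexp x)
        = fun x => rexp ((w : ℝ) / 2) * gaussianPDFReal (w : ℝ) w x := by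
      ext x
      rw [smul_eq_mul, Real.coe_toNNReal _ (gaussianPDFReal_nonneg 0 w x), mul_comm,
        my_exp_mul_pdf w hw x]
    constructor
    · rw [hden, integrable_withDensity_iff_integrable_smul hpm]
      simp only [NNReal.smul_def]
      rw [show (fun x => ((gaussianPDFReal 0 w x).toNNReal : ℝ) • rexp x)
          = fun x => rexp ((w : ℝ) / 2) * gaussianPDFReal (w : ℝ) w x from hkey]
      exact (integrable_gaussianPDFReal _ _).const_mul _
    · rw [hden, integral_withDensity_eq_integral_smul hpm]
      simp only [NNReal.smul_def]
      rw [show (fun x => ((gaussianPDFReal 0 w x).toNNReal : ℝ) • rexp x)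
          = fun x => rexp ((w : ℝ) / 2) * gaussianPDFReal (w : ℝ) w x from hkey,
        integral_const_mul, integral_gaussianPDFReal_eq_one _ hw, mul_one]

lemma my_map_affine (m c : ℝ) (v : NNReal) :
    (gaussianReal m v).map (fun y => c * (y - m))
      = gaussianReal 0 (⟨c ^ 2, sq_nonneg c⟩ * v) := by
  have h : (fun y : ℝ => c * (y - m)) = (fun y => c * y) ∘ (fun y => y + (-m)) := by
    ext y; simp [sub_eq_add_neg]
  rw [h, ← Measure.map_map (by fun_prop) (by fun_prop)]
  rw [show (fun y : ℝ => y + (-m)) = (· + (-m)) from rfl, gaussianReal_map_add_const,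
    show (fun y : ℝ => c * y) = (c * ·) from rfl, gaussianReal_map_const_mul]
  simp
  rfl

lemma my_coord (m c : ℝ) (v : NNReal) :
    Integrable (fun y => rexp (c * (y - m))) (gaussianReal m v) ∧
      ∫ y, rexp (c * (y - m)) ∂(gaussianReal m v) = rexp (c ^ 2 * (v : ℝ) / 2) := by
  have hmap := my_map_affine m c v
  have hmeas : Measurable fun y : ℝ => c * (y - m) := by fun_prop
  have base := my_integral_exp_gauss0 (⟨c ^ 2, sq_nonneg c⟩ * v)
  have hcoe : ((⟨c ^ 2, sq_nonneg c⟩ * v : NNReal) : ℝ) = c ^ 2 * (v : ℝ) := rfl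
  constructor
  · have : Integrable rexp ((gaussianReal m v).map (fun y => c * (y - m))) := by
      rw [hmap]; exact base.1
    exact (integrable_map_measure (Continuous.aestronglyMeasurable continuous_exp)
      hmeas.aemeasurable).mp this
  · have : ∫ y, rexp (c * (y - m)) ∂(gaussianReal m v)
        = ∫ x, rexp x ∂((gaussianReal m v).map (fun y => c * (y - m))) := by
      rw [integral_map hmeas.aemeasurable (Continuous.aestronglyMeasurable continuous_exp)]
    rw [this, hmap, base.2, hcoe]

lemma my_pi_inter {d : ℕ} (ν : Fin d → Measure ℝ) [∀ i, IsProbabilityMeasure (ν i)]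
    (S : Finset (Fin d)) (sets : Fin d → Set ℝ) (hm : ∀ i ∈ S, MeasurableSet (sets i)) :
    Measure.pi ν (⋂ i ∈ S, (fun x : Fin d → ℝ => x i) ⁻¹' sets i)
      = ∏ i ∈ S, ν i (sets i) := by
  classical
  have hset : (⋂ i ∈ S, (fun x : Fin d → ℝ => x i) ⁻¹' sets i)
      = Set.pi Set.univ (fun i => if i ∈ S then sets i else Set.univ) := by
    ext x
    simp only [Set.mem_iInter, Set.mem_preimage, Set.mem_pi, Set.mem_univ, true_implies]
    constructor
    · intro h i
      by_cases hi : i ∈ S <;> simp [hi, h]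
    · intro h i hi
      have := h i
      simpa [hi] using this
  rw [hset, Measure.pi_pi]
  rw [← Finset.prod_subset (Finset.subset_univ S) (fun i _ hi => by simp [hi])]
  exact Finset.prod_congr rfl fun i hi => by simp [hi]

lemma my_map_eval {d : ℕ} (ν : Fin d → Measure ℝ) [∀ i, IsProbabilityMeasure (ν i)] (i : Fin d) :
    (Measure.pi ν).map (fun x : Fin d → ℝ => x i) = ν i := by
  ext s hs
  rw [Measure.map_apply (measurable_pi_apply i) hs]
  have := my_pi_inter ν {i} (fun _ => s) (by simp [hs])
  simpa using this

lemma my_indep {d : ℕ} (ν : Fin d → Measure ℝ) [∀ i, IsProbabilityMeasure (ν i)] :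
    iIndepFun (fun i (x : Fin d → ℝ) => x i) (Measure.pi ν) := by
  rw [iIndepFun_iff_measure_inter_preimage_eq_mul]
  intro S sets hmeas
  rw [my_pi_inter ν S sets hmeas]
  refine Finset.prod_congr rfl fun i hi => ?_
  have := my_pi_inter ν {i} (fun _ => sets i) (by simp [hmeas i hi])
  simpa using this.symm

lemma my_tail {d : ℕ} (μ : Fin d → ℝ) (σ : ℝ) (hσ : 0 < σ) (v : Fin d → ℝ) :
    (Measure.pi fun i => gaussianReal (μ i) ⟨σ ^ 2, sq_nonneg σ⟩)
      {x | (∑ i, v i ^ 2) / 2 ≤ ∑ i, v i * (x i - μ i)}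
        ≤ ENNReal.ofReal (rexp (-(∑ i, v i ^ 2) / (8 * σ ^ 2))) := by
  set w : NNReal := ⟨σ ^ 2, sq_nonneg σ⟩ with hw
  set ν := Measure.pi fun i => gaussianReal (μ i) w with hν
  have hσ2 : (0 : ℝ) < σ ^ 2 := by positivity
  set t : ℝ := (2 * σ ^ 2)⁻¹ with ht
  have htpos : 0 < t := by positivity
  set Y : Fin d → (Fin d → ℝ) → ℝ := fun i x => v i * (x i - μ i) with hY
  have hYmeas : ∀ i, Measurable (Y i) := fun i =>
    measurable_const.mul ((measurable_pi_apply i).sub measurable_const)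
  have hindep : iIndepFun Y ν :=
    (my_indep _).comp (fun i y => v i * (y - μ i)) (fun i => by fun_prop)
  have hSum : ∀ x, (∑ i, Y i) x = ∑ i, v i * (x i - μ i) := fun x => by
    simp [hY, Finset.sum_apply]
  have hint_i : ∀ i ∈ Finset.univ, Integrable (fun x => rexp (t * Y i x)) ν := by
    intro i _
    have h1 : Integrable (fun y => rexp ((t * v i) * (y - μ i))) (gaussianReal (μ i) w) :=
      (my_coord (μ i) (t * v i) w).1
    have h2 : Integrable (fun y => rexp ((t * v i) * (y - μ i)))
        (ν.map fun x : Fin d → ℝ => x i) := by rw [hν, my_map_eval]; exact h1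
    have := (integrable_map_measure
      (Real.continuous_exp.comp (continuous_const.mul
        (continuous_id.sub continuous_const))).aestronglyMeasurable
      (measurable_pi_apply i).aemeasurable).mp h2
    refine this.congr (Filter.Eventually.of_forall fun x => ?_)
    simp [hY, Function.comp]; ring_nf
  have hint : Integrable (fun x => rexp (t * (∑ i, Y i) x)) ν :=
    hindep.integrable_exp_mul_sum hYmeas hint_i
  have hmgf_i : ∀ i, mgf (Y i) ν t = rexp ((t * v i) ^ 2 * (σ ^ 2) / 2) := by
    intro i
    have h2 : ∫ y, rexp ((t * v i) * (y - μ i)) ∂(gaussianReal (μ i) w)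
        = rexp ((t * v i) ^ 2 * (σ ^ 2) / 2) := (my_coord (μ i) (t * v i) w).2
    rw [mgf]
    have h3 : ∫ x, rexp (t * Y i x) ∂ν
        = ∫ y, rexp ((t * v i) * (y - μ i)) ∂(ν.map fun x : Fin d → ℝ => x i) := by
      rw [integral_map (measurable_pi_apply i).aemeasurable
        (Real.continuous_exp.comp (continuous_const.mul
          (continuous_id.sub continuous_const))).aestronglyMeasurable]
      congr 1; ext x; simp [hY]; ring_nf
    rw [h3, hν, my_map_eval, h2]
  have hmgf : mgf (∑ i, Y i) ν t = rexp (t ^ 2 * σ ^ 2 * (∑ i, v i ^ 2) / 2) := by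
    rw [hindep.mgf_sum hYmeas]
    simp_rw [hmgf_i]
    rw [← Real.exp_sum]
    congr 1
    have h4 : ∀ i : Fin d, (t * v i) ^ 2 * σ ^ 2 / 2 = t ^ 2 * σ ^ 2 * v i ^ 2 / 2 :=
      fun i => by ring
    simp_rw [h4]
    rw [← Finset.sum_div, ← Finset.mul_sum]
  have hmarkov := measure_ge_le_exp_mul_mgf (μ := ν) (X := ∑ i, Y i)
    ((∑ i, v i ^ 2) / 2) htpos.le hint
  rw [hmgf, ← Real.exp_add] at hmarkov
  have hexp : -t * ((∑ i, v i ^ 2) / 2) + t ^ 2 * σ ^ 2 * (∑ i, v i ^ 2) / 2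
      = -(∑ i, v i ^ 2) / (8 * σ ^ 2) := by
    rw [ht]; field_simp; ring
  rw [hexp] at hmarkov
  have hEv : {x | (∑ i, v i ^ 2) / 2 ≤ ∑ i, v i * (x i - μ i)}
      = {x | (∑ i, v i ^ 2) / 2 ≤ (∑ i, Y i) x} := by
    ext x; simp [hSum]
  rw [hEv]
  calc ν {x | (∑ i, v i ^ 2) / 2 ≤ (∑ i, Y i) x}
      = ENNReal.ofReal ((ν {x | (∑ i, v i ^ 2) / 2 ≤ (∑ i, Y i) x}).toReal) :=
        (ENNReal.ofReal_toReal (measure_ne_top _ _)).symm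
    _ ≤ _ := ENNReal.ofReal_le_ofReal hmarkov

end GaussAux

/-- Gaussian margin bound: if every competitor prototype `p ∈ C` satisfies `‖μ - p‖ ≥ γ > 0`
and `z ~ N(μ, σ²I_d)`, then the misclassification probability of the nearest-prototype
classifier, `P(∃ p ∈ C, ‖z − p‖ ≤ ‖z − μ‖)`, is at most `(K−1)·exp(−γ²/(8σ²))`. -/
theorem gaussian_margin_bound
    (d K : ℕ) (hd : 1 ≤ d) (hK : 2 ≤ K) (σ : ℝ) (hσ : 0 < σ)
    (μ : EuclideanSpace ℝ (Fin d))
    (C : Finset (EuclideanSpace ℝ (Fin d))) (hC : C.Nonempty) (hcard : C.card = K - 1)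
    (γ : ℝ) (hγ : 0 < γ) (hsep : ∀ p ∈ C, γ ≤ ‖μ - p‖) :
    gaussianNd μ σ {z | ∃ p ∈ C, ‖z - p‖ ≤ ‖z - μ‖} ≤
      ENNReal.ofReal (((K : ℝ) - 1) * Real.exp (-γ ^ 2 / (8 * σ ^ 2))) := by
  classical
  set w : NNReal := ⟨σ ^ 2, sq_nonneg σ⟩ with hw
  set ν := Measure.pi fun i : Fin d => gaussianReal (μ i) w with hν
  set e := (MeasurableEquiv.toLp 2 (Fin d → ℝ)).symm with he
  have hcoord : ∀ (x : Fin d → ℝ) (i : Fin d), (e.symm x) i = x i := fun x i => by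
    rfl
  have hinner : ∀ a b : EuclideanSpace ℝ (Fin d),
      (inner ℝ a b : ℝ) = ∑ i, a i * b i := fun a b => by
    simp [PiLp.inner_apply, RCLike.inner_apply, conj_trivial, mul_comm]
  have hPS : ∀ p : EuclideanSpace ℝ (Fin d),
      ‖p - μ‖ ^ 2 = ∑ i, (p i - μ i) ^ 2 := fun p => by
    rw [← real_inner_self_eq_norm_sq, hinner]
    refine Finset.sum_congr rfl fun i _ => ?_
    simp only [PiLp.sub_apply]
    ring
  have hmap : gaussianNd μ σ {z | ∃ p ∈ C, ‖z - p‖ ≤ ‖z - μ‖}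
      = ν (⇑e.symm ⁻¹' {z | ∃ p ∈ C, ‖z - p‖ ≤ ‖z - μ‖}) := by
    simp only [gaussianNd]; exact MeasurableEquiv.map_apply _ _
  have hpre : ⇑e.symm ⁻¹' {z | ∃ p ∈ C, ‖z - p‖ ≤ ‖z - μ‖}
      = ⋃ p ∈ C, {x : Fin d → ℝ | ‖e.symm x - p‖ ≤ ‖e.symm x - μ‖} := by
    ext x; simp
  have hev : ∀ p : EuclideanSpace ℝ (Fin d),
      {x : Fin d → ℝ | ‖e.symm x - p‖ ≤ ‖e.symm x - μ‖}
      = {x | (∑ i, (p i - μ i) ^ 2) / 2 ≤ ∑ i, (p i - μ i) * (x i - μ i)} := by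
    intro p
    ext x
    simp only [Set.mem_setOf_eq]
    set z := e.symm x with hz
    have hzsub : z - p = (z - μ) - (p - μ) := by abel
    have hexp : ‖z - p‖ ^ 2
        = ‖z - μ‖ ^ 2 - 2 * (inner ℝ (z - μ) (p - μ) : ℝ) + ‖p - μ‖ ^ 2 := by
      rw [hzsub]; exact norm_sub_sq_real _ _
    have hzin : (inner ℝ (z - μ) (p - μ) : ℝ) = ∑ i, (p i - μ i) * (x i - μ i) := by
      rw [hinner]
      refine Finset.sum_congr rfl fun i _ => ?_
      simp only [PiLp.sub_apply, hz, hcoord]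
      ring
    constructor
    · intro h
      have h2 : ‖z - p‖ ^ 2 ≤ ‖z - μ‖ ^ 2 := pow_le_pow_left₀ (norm_nonneg _) h 2
      rw [hexp] at h2
      rw [← hPS p, ← hzin]
      linarith
    · intro h
      rw [← hPS p, ← hzin] at h
      have h2 : ‖z - p‖ ^ 2 ≤ ‖z - μ‖ ^ 2 := by rw [hexp]; linarith
      calc ‖z - p‖ = Real.sqrt (‖z - p‖ ^ 2) := (Real.sqrt_sq (norm_nonneg _)).symm
        _ ≤ Real.sqrt (‖z - μ‖ ^ 2) := Real.sqrt_le_sqrt h2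
        _ = ‖z - μ‖ := Real.sqrt_sq (norm_nonneg _)
  rw [hmap, hpre]
  calc ν (⋃ p ∈ C, {x : Fin d → ℝ | ‖e.symm x - p‖ ≤ ‖e.symm x - μ‖})
      ≤ ∑ p ∈ C, ν {x : Fin d → ℝ | ‖e.symm x - p‖ ≤ ‖e.symm x - μ‖} :=
        measure_biUnion_finset_le _ _
    _ ≤ ∑ _p ∈ C, ENNReal.ofReal (Real.exp (-γ ^ 2 / (8 * σ ^ 2))) := by
        refine Finset.sum_le_sum fun p hp => ?_
        rw [hev p]
        have htail := my_tail μ σ hσ (fun i => p i - μ i)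
        refine le_trans htail (ENNReal.ofReal_le_ofReal ?_)
        have hSγ : γ ^ 2 ≤ ∑ i, (p i - μ i) ^ 2 := by
          rw [← hPS p]
          have h1 : γ ≤ ‖p - μ‖ := by rw [norm_sub_rev]; exact hsep p hp
          calc γ ^ 2 ≤ ‖p - μ‖ ^ 2 := pow_le_pow_left₀ hγ.le h1 2
            _ = _ := rfl
        apply Real.exp_le_exp.mpr
        have h8 : (0 : ℝ) < 8 * σ ^ 2 := by positivity
        exact (div_le_div_iff_of_pos_right h8).mpr (by linarith)
    _ ≤ ENNReal.ofReal (((K : ℝ) - 1) * Real.exp (-γ ^ 2 / (8 * σ ^ 2))) := by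
        rw [Finset.sum_const, hcard, nsmul_eq_mul, ← ENNReal.ofReal_natCast (K - 1),
          ← ENNReal.ofReal_mul (by positivity)]
        apply ENNReal.ofReal_le_ofReal
        have hKc : ((K - 1 : ℕ) : ℝ) = (K : ℝ) - 1 := by
          rw [Nat.cast_sub (by omega)]; simp
        rw [hKc]
end

section
/- Let d ≥ 1, σ > 0, and let μ, p ∈ ℝ^d with p ≠ μ. If z is distributed according to the multivariate Gaussian N(μ, σ²I_d), then P(‖z − p‖ ≤ ‖z − μ‖) ≤ exp(−‖p − μ‖²/(8σ²)). -/
open MeasureTheory ProbabilityTheory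

open Real in
open scoped NNReal ENNReal in
lemma exp_mul_gaussianPDFReal (m : ℝ) {v : ℝ≥0} (hv : v ≠ 0) (a x : ℝ) :
    Real.exp (a * (x - m)) * gaussianPDFReal m v x
      = Real.exp ((v : ℝ) * a ^ 2 / 2) * gaussianPDFReal (m + a * v) v x := by
  have hv' : (0:ℝ) < v := lt_of_le_of_ne v.coe_nonneg (by exact_mod_cast (Ne.symm hv))
  simp only [gaussianPDFReal]
  rw [mul_left_comm, mul_left_comm (Real.exp _)]
  congr 1
  rw [← Real.exp_add, ← Real.exp_add]
  congr 1
  field_simp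
  ring

open Real in
open scoped NNReal ENNReal in
lemma integral_exp_gaussianReal (m : ℝ) {v : ℝ≥0} (hv : v ≠ 0) (a : ℝ) :
    ∫ x, Real.exp (a * (x - m)) ∂(gaussianReal m v) = Real.exp ((v : ℝ) * a ^ 2 / 2) := by
  rw [gaussianReal_of_var_ne_zero m hv]
  have hmeas : Measurable fun x => (gaussianPDFReal m v x).toNNReal :=
    (measurable_gaussianPDFReal m v).real_toNNReal
  rw [show gaussianPDF m v = fun x => ((gaussianPDFReal m v x).toNNReal : ℝ≥0∞) from rfl,
    integral_withDensity_eq_integral_smul hmeas]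
  have : (fun x => ((gaussianPDFReal m v x).toNNReal : ℝ≥0) • Real.exp (a * (x - m)))
      = fun x => Real.exp ((v : ℝ) * a ^ 2 / 2) * gaussianPDFReal (m + a * v) v x := by
    funext x
    rw [NNReal.smul_def, smul_eq_mul, Real.coe_toNNReal _ (gaussianPDFReal_nonneg m v x),
      mul_comm, exp_mul_gaussianPDFReal m hv a x]
  rw [this, integral_const_mul, integral_gaussianPDFReal_eq_one (m + a * v) hv, mul_one]

open Real in
open scoped NNReal ENNReal in
lemma integrable_exp_gaussianReal (m : ℝ) {v : ℝ≥0} (hv : v ≠ 0) (a : ℝ) :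
    Integrable (fun x => Real.exp (a * (x - m))) (gaussianReal m v) := by
  rw [gaussianReal_of_var_ne_zero m hv]
  have hmeas : Measurable fun x => (gaussianPDFReal m v x).toNNReal :=
    (measurable_gaussianPDFReal m v).real_toNNReal
  rw [show gaussianPDF m v = fun x => ((gaussianPDFReal m v x).toNNReal : ℝ≥0∞) from rfl,
    integrable_withDensity_iff_integrable_smul hmeas]
  have : (fun x => ((gaussianPDFReal m v x).toNNReal : ℝ≥0) • Real.exp (a * (x - m)))
      = fun x => Real.exp ((v : ℝ) * a ^ 2 / 2) * gaussianPDFReal (m + a * v) v x := by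
    funext x
    rw [NNReal.smul_def, smul_eq_mul, Real.coe_toNNReal _ (gaussianPDFReal_nonneg m v x),
      mul_comm, exp_mul_gaussianPDFReal m hv a x]
  rw [this]
  exact (integrable_gaussianPDFReal (m + a * v) v).const_mul _

open scoped NNReal ENNReal RealInnerProductSpace in
/-- If `z ~ N(μ, σ²I_d)` and `p ≠ μ`, then
`P(‖z − p‖ ≤ ‖z − μ‖) ≤ exp(−‖p − μ‖² / (8σ²))`. -/
theorem gaussian_halfspace_tail_bound
    (d : ℕ) (hd : 1 ≤ d) (σ : ℝ) (hσ : 0 < σ)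
    (μ p : EuclideanSpace ℝ (Fin d)) (hp : p ≠ μ) :
    gaussianNd μ σ {z | ‖z - p‖ ≤ ‖z - μ‖} ≤
      ENNReal.ofReal (Real.exp (-‖p - μ‖ ^ 2 / (8 * σ ^ 2))) := by
  have hσ2 : (0:ℝ) < σ ^ 2 := by positivity
  set v : ℝ≥0 := ⟨σ ^ 2, sq_nonneg σ⟩ with hvdef
  have hvR : (v : ℝ) = σ ^ 2 := rfl
  have hv0 : v ≠ 0 := by
    intro h
    have : (v : ℝ) = 0 := by rw [h]; simp
    rw [hvR] at this; exact hσ2.ne' this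
  set c : Fin d → ℝ := fun i => p i - μ i with hc
  set t : ℝ := 1 / (2 * σ ^ 2) with htdef
  have ht : 0 ≤ t := by positivity
  set ν := Measure.pi fun i => gaussianReal (μ i) v with hν
  set X : (Fin d → ℝ) → ℝ := fun x => ∑ i, (x i - μ i) * c i with hX
  have hns : ‖p - μ‖ ^ 2 = ∑ i, c i ^ 2 := by
    rw [EuclideanSpace.norm_eq, Real.sq_sqrt (Finset.sum_nonneg fun i _ => sq_nonneg _)]
    refine Finset.sum_congr rfl fun i _ => ?_
    simp [hc, Real.norm_eq_abs, sq_abs]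
  have hS : MeasurableSet {z : EuclideanSpace ℝ (Fin d) | ‖z - p‖ ≤ ‖z - μ‖} := by
    apply measurableSet_le
    · exact ((continuous_id.sub continuous_const).norm).measurable
    · exact ((continuous_id.sub continuous_const).norm).measurable
  rw [gaussianNd, Measure.map_apply (MeasurableEquiv.measurable _) hS]
  have hset : (⇑(MeasurableEquiv.toLp 2 (Fin d → ℝ)) ⁻¹' {z | ‖z - p‖ ≤ ‖z - μ‖})
      = {x : Fin d → ℝ | ‖p - μ‖ ^ 2 / 2 ≤ X x} := by
    ext x
    simp only [Set.mem_preimage, Set.mem_setOf_eq]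
    set z : EuclideanSpace ℝ (Fin d) := (MeasurableEquiv.toLp 2 (Fin d → ℝ)) x with hz
    have hzi : ∀ i, z i = x i := fun i => rfl
    rw [← pow_le_pow_iff_left₀ (norm_nonneg (z - p)) (norm_nonneg (z - μ)) (two_ne_zero),
      show z - p = (z - μ) - (p - μ) by abel, norm_sub_sq_real]
    have hinner : ⟪z - μ, p - μ⟫ = X x := by
      rw [PiLp.inner_apply, hX]
      refine Finset.sum_congr rfl fun i _ => ?_
      simp [hzi i, hc, RCLike.inner_apply, mul_comm]
    rw [hinner]
    constructor <;> intro h <;> nlinarith [h]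
  rw [hset]
  haveI : IsProbabilityMeasure ν := by rw [hν]; infer_instance
  have hfun : (fun x : Fin d → ℝ => Real.exp (t * X x))
      = fun x => ∏ i, Real.exp ((t * c i) * (x i - μ i)) := by
    funext x
    rw [← Real.exp_sum]
    congr 1
    rw [hX, Finset.mul_sum]
    exact Finset.sum_congr rfl fun i _ => by ring
  have hint : Integrable (fun x => Real.exp (t * X x)) ν := by
    rw [hfun]
    exact Integrable.fintype_prod_dep (E := fun _ => ℝ)
      (f := fun i x => Real.exp ((t * c i) * (x - μ i)))
      (μ := fun i => gaussianReal (μ i) v)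
      (fun i => integrable_exp_gaussianReal (μ i) hv0 (t * c i))
  have hmgf : mgf X ν t = Real.exp (∑ i, (v : ℝ) * (t * c i) ^ 2 / 2) := by
    rw [mgf]
    calc ∫ x, Real.exp (t * X x) ∂ν
        = ∏ i, ∫ x, Real.exp ((t * c i) * (x - μ i)) ∂(gaussianReal (μ i) v) := by
          rw [hfun]
          exact integral_fintype_prod_eq_prod (E := fun _ => ℝ)
            (fun i x => Real.exp ((t * c i) * (x - μ i)))
            (μ := fun i => gaussianReal (μ i) v)
      _ = ∏ i, Real.exp ((v : ℝ) * (t * c i) ^ 2 / 2) := by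
          exact Finset.prod_congr rfl fun i _ => integral_exp_gaussianReal (μ i) hv0 (t * c i)
      _ = Real.exp (∑ i, (v : ℝ) * (t * c i) ^ 2 / 2) := (Real.exp_sum _ _).symm
  have hcher := measure_ge_le_exp_mul_mgf (X := X) (μ := ν) (‖p - μ‖ ^ 2 / 2) ht hint
  rw [← ENNReal.ofReal_toReal (measure_ne_top ν _)]
  refine ENNReal.ofReal_le_ofReal (hcher.trans (le_of_eq ?_))
  rw [hmgf, ← Real.exp_add]
  congr 1
  have hsum : ∑ i, (v : ℝ) * (t * c i) ^ 2 / 2 = (v : ℝ) * t ^ 2 / 2 * ‖p - μ‖ ^ 2 := by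
    rw [hns, Finset.mul_sum]
    exact Finset.sum_congr rfl fun i _ => by ring
  rw [hsum, hvR, htdef]
  field_simp
  ring
end

section
/- Let T ≥ 2 and let μ^(0), μ^(1), …, μ^(T) be points in ℝ^d. Define first differences v^(t) = μ^(t) − μ^(t−1) for t = 1, …, T, second differences κ^(t) = μ^(t+1) − 2μ^(t) + μ^(t−1) for t = 1, …, T−1, and curvature energy 𝒦 = ‖v^(1)‖² + Σ_{t=1}^{T−1} ‖κ^(t)‖². Then Σ_{t=1}^{T} ‖v^(t)‖² ≤ (T(T+1)/2)·𝒦. -/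
open Finset

/-- Telescoping: the `n+1`-st velocity is the first velocity plus the sum of curvatures. -/
lemma tele_velocity (d : ℕ) (μ : ℕ → EuclideanSpace ℝ (Fin d)) (n : ℕ) :
    μ (n + 1) - μ n =
      (μ 1 - μ 0) + ∑ s ∈ Finset.Icc 1 n, (μ (s + 1) - (2 : ℝ) • μ s + μ (s - 1)) := by
  induction n with
  | zero => simp
  | succ n ih =>
    rw [Finset.sum_Icc_succ_top (by omega : 1 ≤ n + 1), ← add_assoc, ← ih]
    have : n + 1 - 1 = n := by omega
    rw [this, two_smul]
    abel

lemma icc_sum_shift (b : ℕ → ℝ) (m : ℕ) :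
    ∑ s ∈ Finset.Icc 1 m, b s = ∑ x ∈ Finset.range m, b (x + 1) := by
  rw [← Finset.Ico_add_one_right_eq_Icc, Finset.sum_Ico_eq_sum_range]
  simp [add_comm]

/-- Cauchy–Schwarz style bound for a sum of `m+1` nonnegative reals. -/
lemma sq_add_sum_le (a : ℝ) (b : ℕ → ℝ) (m : ℕ) :
    (a + ∑ s ∈ Finset.Icc 1 m, b s) ^ 2 ≤
      ((m : ℝ) + 1) * (a ^ 2 + ∑ s ∈ Finset.Icc 1 m, b s ^ 2) := by
  set h : ℕ → ℝ := fun s => if s = 0 then a else b s with hh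
  have h1 : a + ∑ s ∈ Finset.Icc 1 m, b s = ∑ s ∈ Finset.range (m + 1), h s := by
    rw [icc_sum_shift, Finset.sum_range_succ']
    simp [hh, add_comm]
  have h2 : a ^ 2 + ∑ s ∈ Finset.Icc 1 m, b s ^ 2 = ∑ s ∈ Finset.range (m + 1), h s ^ 2 := by
    rw [icc_sum_shift, Finset.sum_range_succ']
    simp [hh, add_comm]
  rw [h1, h2]
  have := sq_sum_le_card_mul_sum_sq (s := Finset.range (m + 1)) (f := h)
  simpa using this

/-- Discrete Sobolev-type inequality: with velocities `v⁽ᵗ⁾ = μ⁽ᵗ⁾ − μ⁽ᵗ⁻¹⁾` and curvature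
vectors `κ⁽ᵗ⁾ = μ⁽ᵗ⁺¹⁾ − 2μ⁽ᵗ⁾ + μ⁽ᵗ⁻¹⁾`, and curvature energy
`𝒦 = ‖v⁽¹⁾‖² + Σ_{t=1}^{T−1} ‖κ⁽ᵗ⁾‖²`, one has
`Σ_{t=1}^{T} ‖v⁽ᵗ⁾‖² ≤ (T(T+1)/2)·𝒦`. -/
theorem sq_velocity_le_curvature_energy
    (d T : ℕ) (hT : 2 ≤ T) (μ : ℕ → EuclideanSpace ℝ (Fin d)) :
    ∑ t ∈ Finset.Icc 1 T, ‖μ t - μ (t - 1)‖ ^ 2 ≤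
      ((T : ℝ) * ((T : ℝ) + 1) / 2) *
        (‖μ 1 - μ 0‖ ^ 2 +
          ∑ t ∈ Finset.Icc 1 (T - 1), ‖μ (t + 1) - (2 : ℝ) • μ t + μ (t - 1)‖ ^ 2) := by
  set K : ℝ := ‖μ 1 - μ 0‖ ^ 2 +
      ∑ t ∈ Finset.Icc 1 (T - 1), ‖μ (t + 1) - (2 : ℝ) • μ t + μ (t - 1)‖ ^ 2 with hK
  have hK0 : 0 ≤ K := by positivity
  have key : ∀ t ∈ Finset.Icc 1 T, ‖μ t - μ (t - 1)‖ ^ 2 ≤ (t : ℝ) * K := by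
    intro t ht
    simp only [Finset.mem_Icc] at ht
    obtain ⟨h1t, htT⟩ := ht
    obtain ⟨m, rfl⟩ : ∃ m, t = m + 1 := ⟨t - 1, by omega⟩
    have hm : m + 1 - 1 = m := by omega
    rw [hm]
    have hnorm : ‖μ (m + 1) - μ m‖ ≤
        ‖μ 1 - μ 0‖ + ∑ s ∈ Finset.Icc 1 m, ‖μ (s + 1) - (2 : ℝ) • μ s + μ (s - 1)‖ := by
      rw [tele_velocity d μ m]
      exact le_trans (norm_add_le _ _) (by
        gcongr
        exact norm_sum_le _ _)
    have hsq : ‖μ (m + 1) - μ m‖ ^ 2 ≤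
        (‖μ 1 - μ 0‖ + ∑ s ∈ Finset.Icc 1 m, ‖μ (s + 1) - (2 : ℝ) • μ s + μ (s - 1)‖) ^ 2 := by
      apply pow_le_pow_left₀ (norm_nonneg _) hnorm
    refine hsq.trans ((sq_add_sum_le _ _ m).trans ?_)
    have hsub : ‖μ 1 - μ 0‖ ^ 2 +
        ∑ s ∈ Finset.Icc 1 m, ‖μ (s + 1) - (2 : ℝ) • μ s + μ (s - 1)‖ ^ 2 ≤ K := by
      rw [hK]
      gcongr
      omega
    calc ((m : ℝ) + 1) * (‖μ 1 - μ 0‖ ^ 2 +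
            ∑ s ∈ Finset.Icc 1 m, ‖μ (s + 1) - (2 : ℝ) • μ s + μ (s - 1)‖ ^ 2)
        ≤ ((m : ℝ) + 1) * K := mul_le_mul_of_nonneg_left hsub (by positivity)
      _ = ((m + 1 : ℕ) : ℝ) * K := by push_cast; ring
  have hgauss : (∑ t ∈ Finset.Icc 1 T, (t : ℝ)) = (T : ℝ) * ((T : ℝ) + 1) / 2 := by
    have h1 : ∑ t ∈ Finset.Icc 1 T, t = ∑ t ∈ Finset.range (T + 1), t := by
      rw [Finset.sum_range_succ']
      have := icc_sum_shift (fun s => (s : ℝ)) T  -- not usable for ℕ; do directly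
      rw [← Finset.Ico_add_one_right_eq_Icc, Finset.sum_Ico_eq_sum_range]
      simp [add_comm]
    have h2 := Finset.sum_range_id_mul_two (T + 1)
    have h3 : (∑ t ∈ Finset.Icc 1 T, t) * 2 = T * (T + 1) := by
      rw [h1, h2]; simp [Nat.mul_comm]
    have := congrArg (fun n : ℕ => (n : ℝ)) h3
    push_cast at this
    linarith
  calc ∑ t ∈ Finset.Icc 1 T, ‖μ t - μ (t - 1)‖ ^ 2
      ≤ ∑ t ∈ Finset.Icc 1 T, (t : ℝ) * K := Finset.sum_le_sum key
    _ = (∑ t ∈ Finset.Icc 1 T, (t : ℝ)) * K := by rw [Finset.sum_mul]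
    _ = ((T : ℝ) * ((T : ℝ) + 1) / 2) * K := by rw [hgauss]
end

section
/- Let T ≥ 2 and let μ^(0), μ^(1), …, μ^(T) be points in ℝ^d. Define first differences v^(t) = μ^(t) − μ^(t−1) for t = 1, …, T, second differences κ^(t) = μ^(t+1) − 2μ^(t) + μ^(t−1) for t = 1, …, T−1, path length S = Σ_{t=1}^{T} ‖v^(t)‖, and curvature energy 𝒦 = ‖v^(1)‖² + Σ_{t=1}^{T−1} ‖κ^(t)‖². Then S ≤ T·√((T+1)/2)·√𝒦. -/
private lemma gauss_aux : ∀ n : ℕ, ∑ t ∈ Finset.Icc 1 n, (t : ℝ) = (n : ℝ) * ((n : ℝ) + 1) / 2 := by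
  intro n
  induction n with
  | zero => simp
  | succ m ih =>
    rw [← Finset.insert_Icc_right_eq_Icc_add_one (by omega), Finset.sum_insert (by simp), ih]
    push_cast
    ring

section aux

variable {d : ℕ} (μ : ℕ → EuclideanSpace ℝ (Fin d))

private lemma telescope_aux : ∀ t : ℕ, 1 ≤ t →
    μ t - μ (t - 1) = (μ 1 - μ 0) +
      ∑ s ∈ Finset.Icc 1 (t - 1), (μ (s + 1) - (2 : ℝ) • μ s + μ (s - 1)) := by
  intro t
  induction t with
  | zero => omega
  | succ n ih =>
    intro _
    rcases Nat.eq_zero_or_pos n with hn | hn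
    · subst hn; simp
    · have h1 : n + 1 - 1 = n := rfl
      have hn' : n = (n - 1) + 1 := by omega
      have h2 : Finset.Icc 1 n = insert n (Finset.Icc 1 (n - 1)) := by
        conv_lhs => rw [hn']
        rw [← Finset.insert_Icc_right_eq_Icc_add_one (by omega), ← hn']
      rw [h1, h2, Finset.sum_insert (by simp; omega)]
      have ih' := ih hn
      have h3 : μ (n + 1) - (2 : ℝ) • μ n + μ (n - 1)
          = (μ (n + 1) - μ n) - (μ n - μ (n - 1)) := by
        rw [two_smul]; abel
      rw [h3, ih']
      abel

end aux

/-- Path length is controlled by curvature energy: with velocities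
`v⁽ᵗ⁾ = μ⁽ᵗ⁾ − μ⁽ᵗ⁻¹⁾`, curvature vectors `κ⁽ᵗ⁾ = μ⁽ᵗ⁺¹⁾ − 2μ⁽ᵗ⁾ + μ⁽ᵗ⁻¹⁾`,
path length `S = Σ_{t=1}^{T} ‖v⁽ᵗ⁾‖`, and curvature energy
`𝒦 = ‖v⁽¹⁾‖² + Σ_{t=1}^{T−1} ‖κ⁽ᵗ⁾‖²`, one has `S ≤ T·√((T+1)/2)·√𝒦`. -/
theorem path_length_le_curvature_energy
    (d T : ℕ) (hT : 2 ≤ T) (μ : ℕ → EuclideanSpace ℝ (Fin d)) :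
    ∑ t ∈ Finset.Icc 1 T, ‖μ t - μ (t - 1)‖ ≤
      (T : ℝ) * Real.sqrt (((T : ℝ) + 1) / 2) *
        Real.sqrt (‖μ 1 - μ 0‖ ^ 2 +
          ∑ t ∈ Finset.Icc 1 (T - 1), ‖μ (t + 1) - (2 : ℝ) • μ t + μ (t - 1)‖ ^ 2) := by
  set K : ℝ := ‖μ 1 - μ 0‖ ^ 2 +
      ∑ t ∈ Finset.Icc 1 (T - 1), ‖μ (t + 1) - (2 : ℝ) • μ t + μ (t - 1)‖ ^ 2 with hK
  have hK0 : 0 ≤ K := by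
    apply add_nonneg (by positivity)
    exact Finset.sum_nonneg fun i _ => by positivity
  -- Step 1: pointwise bound
  have key : ∀ t ∈ Finset.Icc 1 T,
      ‖μ t - μ (t - 1)‖ ≤ Real.sqrt t * Real.sqrt K := by
    intro t ht
    rw [Finset.mem_Icc] at ht
    obtain ⟨ht1, htT⟩ := ht
    have hb : ‖μ t - μ (t - 1)‖ ≤
        ‖μ 1 - μ 0‖ + ∑ s ∈ Finset.Icc 1 (t - 1), ‖μ (s + 1) - (2 : ℝ) • μ s + μ (s - 1)‖ := by
      rw [telescope_aux μ t ht1]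
      exact (norm_add_le _ _).trans (by gcongr; exact norm_sum_le _ _)
    set A : ℝ := ‖μ 1 - μ 0‖ + ∑ s ∈ Finset.Icc 1 (t - 1), ‖μ (s + 1) - (2 : ℝ) • μ s + μ (s - 1)‖
      with hA
    have hA0 : 0 ≤ A := by
      apply add_nonneg (norm_nonneg _)
      exact Finset.sum_nonneg fun i _ => norm_nonneg _
    set g : ℕ → ℝ := fun s => if s = 0 then ‖μ 1 - μ 0‖
      else ‖μ (s + 1) - (2 : ℝ) • μ s + μ (s - 1)‖ with hg
    have hins : Finset.Icc 0 (t - 1) = insert 0 (Finset.Icc 1 (t - 1)) :=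
      (Finset.insert_Icc_add_one_left_eq_Icc (Nat.zero_le _)).symm
    have hgsum : ∑ s ∈ Finset.Icc 0 (t - 1), g s = A := by
      rw [hins, Finset.sum_insert (by simp)]
      simp only [hg, if_pos rfl, hA]
      congr 1
      exact Finset.sum_congr rfl fun i hi => by
        rw [Finset.mem_Icc] at hi; rw [if_neg (by omega)]
    have hgsq : ∑ s ∈ Finset.Icc 0 (t - 1), g s ^ 2 =
        ‖μ 1 - μ 0‖ ^ 2 + ∑ s ∈ Finset.Icc 1 (t - 1),
          ‖μ (s + 1) - (2 : ℝ) • μ s + μ (s - 1)‖ ^ 2 := by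
      rw [hins, Finset.sum_insert (by simp)]
      simp only [hg, if_pos rfl]
      congr 1
      exact Finset.sum_congr rfl fun i hi => by
        rw [Finset.mem_Icc] at hi; rw [if_neg (by omega)]
    have hcard : (Finset.Icc 0 (t - 1)).card = t := by
      rw [Nat.card_Icc]; omega
    have hcs : A ^ 2 ≤ (t : ℝ) * (‖μ 1 - μ 0‖ ^ 2 + ∑ s ∈ Finset.Icc 1 (t - 1),
        ‖μ (s + 1) - (2 : ℝ) • μ s + μ (s - 1)‖ ^ 2) := by
      rw [← hgsum, ← hgsq]
      have h := sq_sum_le_card_mul_sum_sq (s := Finset.Icc 0 (t - 1)) (f := g)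
      rwa [hcard] at h
    have hsub : ‖μ 1 - μ 0‖ ^ 2 + ∑ s ∈ Finset.Icc 1 (t - 1),
        ‖μ (s + 1) - (2 : ℝ) • μ s + μ (s - 1)‖ ^ 2 ≤ K := by
      rw [hK]
      exact add_le_add_right (Finset.sum_le_sum_of_subset_of_nonneg
        (Finset.Icc_subset_Icc le_rfl (by omega)) (fun i _ _ => by positivity)) _
    have hA2 : A ^ 2 ≤ (t : ℝ) * K := by
      refine hcs.trans ?_
      have ht0 : (0 : ℝ) ≤ (t : ℝ) := by positivity
      exact mul_le_mul_of_nonneg_left hsub ht0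
    calc ‖μ t - μ (t - 1)‖ ≤ A := hb
      _ ≤ Real.sqrt ((t : ℝ) * K) := by
          rw [show A = Real.sqrt (A ^ 2) by rw [Real.sqrt_sq hA0]]
          exact Real.sqrt_le_sqrt hA2
      _ = Real.sqrt t * Real.sqrt K := Real.sqrt_mul (by positivity) _
  -- Step 2: sum the bounds
  have step2 : ∑ t ∈ Finset.Icc 1 T, ‖μ t - μ (t - 1)‖ ≤
      (∑ t ∈ Finset.Icc 1 T, Real.sqrt t) * Real.sqrt K := by
    rw [Finset.sum_mul]
    exact Finset.sum_le_sum key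
  -- Step 3: Σ √t ≤ T √((T+1)/2)
  have step3 : ∑ t ∈ Finset.Icc 1 T, Real.sqrt t ≤
      (T : ℝ) * Real.sqrt (((T : ℝ) + 1) / 2) := by
    have hsq : (∑ t ∈ Finset.Icc 1 T, Real.sqrt t) ^ 2 ≤
        (T : ℝ) * ((T : ℝ) * ((T : ℝ) + 1) / 2) := by
      have h := sq_sum_le_card_mul_sum_sq (s := Finset.Icc 1 T)
        (f := fun t : ℕ => Real.sqrt t)
      have hc : (Finset.Icc 1 T).card = T := by rw [Nat.card_Icc]; omega
      rw [hc] at h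
      refine h.trans ?_
      have : ∑ t ∈ Finset.Icc 1 T, Real.sqrt t ^ 2 = ∑ t ∈ Finset.Icc 1 T, (t : ℝ) :=
        Finset.sum_congr rfl fun i _ => Real.sq_sqrt (by positivity)
      rw [this, gauss_aux T]
    have hnn : 0 ≤ ∑ t ∈ Finset.Icc 1 T, Real.sqrt t :=
      Finset.sum_nonneg fun i _ => Real.sqrt_nonneg _
    have h2 : ∑ t ∈ Finset.Icc 1 T, Real.sqrt t ≤
        Real.sqrt ((T : ℝ) * ((T : ℝ) * ((T : ℝ) + 1) / 2)) := by
      rw [show ∑ t ∈ Finset.Icc 1 T, Real.sqrt t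
          = Real.sqrt ((∑ t ∈ Finset.Icc 1 T, Real.sqrt t) ^ 2) by rw [Real.sqrt_sq hnn]]
      exact Real.sqrt_le_sqrt hsq
    refine h2.trans_eq ?_
    have : (T : ℝ) * ((T : ℝ) * ((T : ℝ) + 1) / 2) = (T : ℝ) ^ 2 * (((T : ℝ) + 1) / 2) := by
      ring
    rw [this, Real.sqrt_mul (by positivity), Real.sqrt_sq (by positivity)]
  calc ∑ t ∈ Finset.Icc 1 T, ‖μ t - μ (t - 1)‖
      ≤ (∑ t ∈ Finset.Icc 1 T, Real.sqrt t) * Real.sqrt K := step2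
    _ ≤ (T : ℝ) * Real.sqrt (((T : ℝ) + 1) / 2) * Real.sqrt K := by
        exact mul_le_mul_of_nonneg_right step3 (Real.sqrt_nonneg _)
end
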